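/- Let p̄_k(λ) = ∑_i [(-1)^{λ_i-i+1}(λ_i-i+1/2)^k - (-1)^{-i+1}(-i+1/2)^k] + c_k, where the constants c_k = p̄_k(∅) are determined by ∑_k c_k z^k/k! = 1/(e^{z/2}+e^{-z/2}). Then for every partition λ and every k ≥ 0, p̄_k(λ') = (-1)^k p̄_k(λ), where λ' is the conjugate partition. -/

import Mathlib

/-- The constants `c_k = p̄_k(∅)`, determined by `∑_k c_k z^k/k! = 1/(e^{z/2}+e^{-z/2})`. -/
noncomputable def ckQ (k : ℕ) : ℚ :=
  (k.factorial : ℚ) * PowerSeries.coeff (R := ℚ) k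
    (PowerSeries.mk fun n => (((1 : ℚ) / 2) ^ n + (-(1 : ℚ) / 2) ^ n) / n.factorial)⁻¹

/-- `p̄_k(λ) = ∑_i [(-1)^{λ_i-i+1}(λ_i-i+1/2)^k - (-1)^{-i+1}(-i+1/2)^k] + c_k`,
the sum taken over `i ≤ N` for any `N` beyond which all terms vanish. -/
noncomputable def pbar (k : ℕ) (lam : ℕ → ℕ) (N : ℕ) : ℝ :=
  (∑ n ∈ Finset.range N,
      ((-1 : ℝ) ^ (lam n + n) * ((lam n : ℝ) - n - 1 / 2) ^ k -
        (-1 : ℝ) ^ n * (-(n : ℝ) - 1 / 2) ^ k)) + (ckQ k : ℝ)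

/-- The conjugate partition: `λ'_{n+1} = #{m : λ_{m+1} > n}`. -/
noncomputable def conjP (lam : ℕ → ℕ) : ℕ → ℕ := fun n => Set.ncard {m : ℕ | n < lam m}

/-!
Put `x_i = λ_i - i + 1/2`. The points `λ'_j - j + 1/2` (`j < M`) and the reflected points
`-x_i` (`i < N`) are distinct and together fill the `M + N` half-integers of `(-M, N)`, and so
do those of the empty partition. Subtracting the two tilings, the sum defining `p̄_k(λ')` equals
minus the sum for `λ` evaluated at the reflected points, and the reflection `x ↦ -x` multiplies
`(-1)^(x + 1/2) x^k` by `-(-1)^k`. The constant `c_k` is unchanged because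
`1/(e^{z/2} + e^{-z/2})` is even.
-/

open Finset

theorem Set.eq_Iio_ncard_of_isLowerSet {S : Set ℕ} (hS : IsLowerSet S) (hfin : S.Finite) :
    S = Set.Iio S.ncard := by
  obtain h | ⟨a, rfl⟩ := hS.eq_univ_or_Iio
  · exact absurd (h ▸ hfin) Set.infinite_univ
  · rw [Set.ncard_Iio_nat]

theorem PowerSeries.constantCoeff_rescale {R : Type*} [CommSemiring R] (a : R)
    (f : PowerSeries R) : PowerSeries.constantCoeff (PowerSeries.rescale a f) =
      PowerSeries.constantCoeff f := by
  rw [← PowerSeries.coeff_zero_eq_constantCoeff_apply, PowerSeries.coeff_rescale, pow_zero,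
    one_mul, PowerSeries.coeff_zero_eq_constantCoeff_apply]

theorem PowerSeries.rescale_inv {k : Type*} [Field k] (a : k) (f : PowerSeries k) :
    PowerSeries.rescale a f⁻¹ = (PowerSeries.rescale a f)⁻¹ := by
  by_cases hf : PowerSeries.constantCoeff f = 0
  · rw [PowerSeries.inv_eq_zero.mpr hf, map_zero, eq_comm, PowerSeries.inv_eq_zero,
      PowerSeries.constantCoeff_rescale, hf]
  · rw [eq_comm, PowerSeries.inv_eq_iff_mul_eq_one (by rwa [PowerSeries.constantCoeff_rescale]),
      ← map_mul, PowerSeries.inv_mul_cancel f hf, map_one]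

section Conjugate

variable {lam : ℕ → ℕ} {N : ℕ}

theorem lt_conjP_iff (hA : Antitone lam) (hN : ∀ i, N ≤ i → lam i = 0) (i j : ℕ) :
    i < conjP lam j ↔ j < lam i := by
  have hlower : IsLowerSet {m | j < lam m} := fun _ _ hab hb => hb.trans_le (hA hab)
  have hfin : {m | j < lam m}.Finite :=
    (Set.finite_Iio N).subset fun m hm => Set.mem_Iio.mpr <| not_le.mp fun h => by
      simp [hN m h] at hm
  exact (Set.ext_iff.mp (Set.eq_Iio_ncard_of_isLowerSet hlower hfin) i).symm

theorem conjP_antitone (hA : Antitone lam) (hN : ∀ i, N ≤ i → lam i = 0) :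
    Antitone (conjP lam) := fun a b hab =>
  forall_lt_iff_le.mp fun i hi =>
    (lt_conjP_iff hA hN i a).mpr (hab.trans_lt ((lt_conjP_iff hA hN i b).mp hi))

theorem conjP_le (hA : Antitone lam) (hN : ∀ i, N ≤ i → lam i = 0) (j : ℕ) :
    conjP lam j ≤ N :=
  forall_lt_iff_le.mp fun i hi => not_le.mp fun h => by
    simpa [hN i h] using (lt_conjP_iff hA hN i j).mp hi

theorem le_of_conjP_eq_zero (hA : Antitone lam) (hN : ∀ i, N ≤ i → lam i = 0) {M : ℕ}
    (hM : conjP lam M = 0) (i : ℕ) : lam i ≤ M := by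
  by_contra h
  simpa [hM] using (lt_conjP_iff hA hN i M).mpr (not_le.mp h)

theorem conjP_zero : conjP (fun _ => 0) = fun _ => 0 := by
  ext n
  simp [conjP]

end Conjugate

section Frobenius

variable {lam : ℕ → ℕ} {N M : ℕ}

theorem strictAnti_sub_of_antitone {f : ℕ → ℕ} (hf : Antitone f) :
    StrictAnti fun n => (f n : ℤ) - n := fun a b hab => by
  have := hf hab.le
  simp only
  omega

theorem strictMono_one_sub_sub_of_antitone {f : ℕ → ℕ} (hf : Antitone f) :
    StrictMono fun n => 1 - ((f n : ℤ) - n) :=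
  fun _ _ hab => Int.sub_lt_sub_left (strictAnti_sub_of_antitone hf hab) 1

theorem disjoint_image_conjP_image_one_sub (hA : Antitone lam) (hN : ∀ i, N ≤ i → lam i = 0) :
    Disjoint ((range M).image fun n => (conjP lam n : ℤ) - n)
      ((range N).image fun n => 1 - ((lam n : ℤ) - n)) := by
  simp only [disjoint_left, mem_image, mem_range]
  rintro _ ⟨j, -, rfl⟩ ⟨i, -, hij⟩
  have := lt_conjP_iff hA hN i j
  omega

theorem image_conjP_union_image_one_sub (hA : Antitone lam) (hN : ∀ i, N ≤ i → lam i = 0)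
    (hM : ∀ i, M ≤ i → conjP lam i = 0) :
    ((range M).image fun n => (conjP lam n : ℤ) - n) ∪
      ((range N).image fun n => 1 - ((lam n : ℤ) - n)) = Icc (1 - (M : ℤ)) N := by
  refine eq_of_subset_of_card_le (fun t ht => ?_) ?_
  · simp only [mem_union, mem_image, mem_range] at ht
    rcases ht with ⟨n, hn, rfl⟩ | ⟨n, hn, rfl⟩
    · have := conjP_le hA hN n
      grind
    · have := le_of_conjP_eq_zero hA hN (hM M le_rfl) n
      grind
  · rw [card_union_of_disjoint (disjoint_image_conjP_image_one_sub hA hN),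
      card_image_of_injective _ (strictAnti_sub_of_antitone (conjP_antitone hA hN)).injective,
      card_image_of_injective _ (strictMono_one_sub_sub_of_antitone hA).injective,
      Int.card_Icc, card_range, card_range]
    omega

theorem sum_conjP_add_sum_one_sub {β : Type*} [AddCommMonoid β] (G : ℤ → β)
    (hA : Antitone lam) (hN : ∀ i, N ≤ i → lam i = 0) (hM : ∀ i, M ≤ i → conjP lam i = 0) :
    ∑ n ∈ range M, G ((conjP lam n : ℤ) - n) + ∑ n ∈ range N, G (1 - ((lam n : ℤ) - n)) =
      ∑ t ∈ Icc (1 - (M : ℤ)) N, G t := by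
  rw [← image_conjP_union_image_one_sub hA hN hM,
    sum_union (disjoint_image_conjP_image_one_sub hA hN),
    sum_image (strictAnti_sub_of_antitone (conjP_antitone hA hN)).injective.injOn,
    sum_image (strictMono_one_sub_sub_of_antitone hA).injective.injOn]

theorem sum_conjP_sub_eq_neg_sum {β : Type*} [AddCommGroup β] (G : ℤ → β)
    (hA : Antitone lam) (hN : ∀ i, N ≤ i → lam i = 0) (hM : ∀ i, M ≤ i → conjP lam i = 0) :
    ∑ n ∈ range M, (G ((conjP lam n : ℤ) - n) - G (-n)) =
      -∑ n ∈ range N, (G (1 - ((lam n : ℤ) - n)) - G (1 - -(n : ℤ))) := by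
  have hlam := sum_conjP_add_sum_one_sub G hA hN hM
  have hempty := sum_conjP_add_sum_one_sub (lam := fun _ => 0) (N := N) (M := M) G
    antitone_const (fun _ _ => rfl) (fun _ _ => congrFun conjP_zero _)
  simp only [conjP_zero, Nat.cast_zero, zero_sub] at hempty
  rw [sum_sub_distrib, sum_sub_distrib, neg_sub, sub_eq_sub_iff_add_eq_add, hlam, ← hempty,
    add_comm]

end Frobenius

/-- The summand `(-1)^(x + 1/2) x^k` of `p̄_k` at the half-integer `x = t - 1/2`. -/
noncomputable def signedPow (k : ℕ) (t : ℤ) : ℝ := (-1 : ℝ) ^ t * ((t : ℝ) - 1 / 2) ^ k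

theorem signedPow_one_sub (k : ℕ) (t : ℤ) :
    signedPow k (1 - t) = -((-1) ^ k * signedPow k t) := by
  have hsign : (-1 : ℝ) ^ (1 - t) = -(-1) ^ t := by
    rw [neg_one_zpow_eq_ite, neg_one_zpow_eq_ite]
    by_cases h : Even t <;> simp [Int.even_sub, h]
  have hbase : (((1 - t : ℤ) : ℝ) - 1 / 2) = -((t : ℝ) - 1 / 2) := by push_cast; ring
  rw [signedPow, signedPow, hsign, hbase, neg_pow]
  ring

theorem pbar_eq_sum_signedPow (k : ℕ) (lam : ℕ → ℕ) (N : ℕ) :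
    pbar k lam N =
      ∑ n ∈ range N, (signedPow k ((lam n : ℤ) - n) - signedPow k (-n)) + ckQ k := by
  have hterm (a n : ℕ) :
      (-1 : ℝ) ^ (a + n) * ((a : ℝ) - n - 1 / 2) ^ k = signedPow k ((a : ℤ) - n) := by
    have hsign : (-1 : ℝ) ^ ((a : ℤ) - n) = (-1) ^ (a + n) := by
      rw [neg_one_zpow_eq_ite, neg_one_pow_eq_ite]
      simp [Int.even_sub, Nat.even_add]
    rw [signedPow, hsign]
    push_cast
    ring
  rw [pbar]
  congr 1
  refine sum_congr rfl fun n _ => ?_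
  simpa using congrArg₂ (· - ·) (hterm (lam n) n) (hterm 0 n)

theorem neg_one_pow_mul_ckQ (k : ℕ) : (-1) ^ k * ckQ k = ckQ k := by
  set f : PowerSeries ℚ :=
    PowerSeries.mk fun n => (((1 : ℚ) / 2) ^ n + (-(1 : ℚ) / 2) ^ n) / n.factorial
  have hf : PowerSeries.rescale (-1) f = f := by
    ext n
    rw [PowerSeries.coeff_rescale, PowerSeries.coeff_mk, ← mul_div_assoc, mul_add, ← mul_pow,
      ← mul_pow]
    norm_num [add_comm]
  have hcoeff := congrArg (PowerSeries.coeff k) (PowerSeries.rescale_inv (-1) f)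
  rw [hf, PowerSeries.coeff_rescale] at hcoeff
  rw [ckQ, mul_left_comm, hcoeff]

/-- `p̄_k(λ') = (-1)^k p̄_k(λ)`. -/
theorem stmt14 (k : ℕ) (lam : ℕ → ℕ) (hA : Antitone lam)
    (N M : ℕ) (hN : ∀ i, N ≤ i → lam i = 0) (hM : ∀ i, M ≤ i → conjP lam i = 0) :
    pbar k (conjP lam) M = (-1) ^ k * pbar k lam N := by
  have hc : ((-1) ^ k * ckQ k : ℝ) = ckQ k := by exact_mod_cast neg_one_pow_mul_ckQ k
  rw [pbar_eq_sum_signedPow, pbar_eq_sum_signedPow, sum_conjP_sub_eq_neg_sum _ hA hN hM,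
    mul_add, hc, mul_sum, ← sum_neg_distrib]
  congr 1
  refine sum_congr rfl fun n _ => ?_
  rw [signedPow_one_sub, signedPow_one_sub]
  ring
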